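/- arXiv:1007.3459 — 3 statements merged into one kernel-verified Lean document; each statement's English description precedes it below -/
import Mathlib

section
/- For every positive integer n, the sum over all unordered partitions of n of the number of distinct parts in the partition equals the total number of occurrences of the part 1 among all unordered partitions of n; that is, S(n) = Q_1(n). -/
/-- Number of unordered partitions of `n` (so `P 0 = 1`, via the empty partition). -/
def P (n : ℕ) : ℕ := Fintype.card (Nat.Partition n)

/-- Total number of occurrences of `k`, counted with multiplicity,
among all unordered partitions of `n` (so `Q k 0 = 0`). -/
def Q (k n : ℕ) : ℕ := ∑ p : Nat.Partition n, p.parts.count k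

/-- Sum over all unordered partitions of `n` of the number of distinct parts. -/
def S (n : ℕ) : ℕ := ∑ p : Nat.Partition n, p.parts.toFinset.card

/-- Number of unordered partitions of `n` containing `k` as a part. -/
def R (k n : ℕ) : ℕ := (Finset.univ.filter (fun p : Nat.Partition n => k ∈ p.parts)).card

/-!
Both sides equal `∑_{k=1}^{n} P (n - k)`. Summing the number of distinct parts over all partitions
counts, for each `1 ≤ k ≤ n`, the partitions having `k` as a part, and deleting one `k` shows there
are `P (n - k)` of them. Likewise the number of `1`s in a partition is the number of `1 ≤ m ≤ n`
such that it has at least `m` ones, and deleting `m` ones shows that `P (n - m)` partitions do.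
-/

open Finset

namespace Nat.Partition

def partitionWithPartsEquiv {n : ℕ} (s : Multiset ℕ) (hs : ∀ i ∈ s, 0 < i) (hsn : s.sum ≤ n) :
    {p : n.Partition // s ≤ p.parts} ≃ (n - s.sum).Partition where
  toFun p :=
    { parts := p.1.parts - s
      parts_pos := fun hi => p.1.parts_pos (Multiset.mem_of_le (Multiset.sub_le_self _ _) hi)
      parts_sum := by
        have h := congrArg Multiset.sum (tsub_add_cancel_of_le p.2)
        rw [Multiset.sum_add, p.1.parts_sum] at h
        omega }
  invFun q :=
    ⟨{ parts := s + q.parts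
       parts_pos := fun hi => (Multiset.mem_add.1 hi).elim (hs _) q.parts_pos
       parts_sum := by rw [Multiset.sum_add, q.parts_sum]; omega },
     Multiset.le_add_right _ _⟩
  left_inv p := Subtype.ext <| Partition.ext <| add_tsub_cancel_of_le p.2
  right_inv q := Partition.ext <| add_tsub_cancel_left _ _

theorem card_filter_le_parts (n : ℕ) (s : Multiset ℕ) (hs : ∀ i ∈ s, 0 < i) (hsn : s.sum ≤ n) :
    #{p : n.Partition | s ≤ p.parts} = P (n - s.sum) := by
  rw [← Fintype.card_subtype]
  exact Fintype.card_congr (partitionWithPartsEquiv s hs hsn)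

theorem card_filter_le_count {n k m : ℕ} (hk : 0 < k) (hmk : m * k ≤ n) :
    #{p : n.Partition | m ≤ p.parts.count k} = P (n - m * k) := by
  have hrep : (Multiset.replicate m k).sum = m * k := by simp
  rw [← hrep, ← card_filter_le_parts n _ (fun i hi => Multiset.eq_of_mem_replicate hi ▸ hk)
    (hrep ▸ hmk)]
  simp only [Multiset.le_count_iff_replicate_le]

theorem count_parts_le {n : ℕ} (p : n.Partition) (k : ℕ) : p.parts.count k ≤ n := by
  have hcard : Multiset.card p.parts • 1 ≤ p.parts.sum :=
    Multiset.card_nsmul_le_sum fun i hi => p.parts_pos hi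
  rw [p.parts_sum, smul_eq_mul, mul_one] at hcard
  exact (Multiset.count_le_card k p.parts).trans hcard

end Nat.Partition

theorem Finset.sum_card_filter_comm {ι κ : Type*} [Fintype ι] (s : Finset κ) (r : ι → κ → Prop)
    [∀ i k, Decidable (r i k)] :
    ∑ i, #{k ∈ s | r i k} = ∑ k ∈ s, #{i | r i k} := by
  simp only [card_filter]
  exact sum_comm

theorem R_eq_P {n k : ℕ} (hk : 1 ≤ k) (hkn : k ≤ n) : R k n = P (n - k) := by
  rw [R, ← Fintype.card_subtype]
  exact Fintype.card_congr (Nat.Partition.partitionWithPartEquiv hk hkn)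

theorem S_eq_sum_R (n : ℕ) : S n = ∑ k ∈ Icc 1 n, R k n := by
  have hdistinct (p : n.Partition) : p.parts.toFinset = {k ∈ Icc 1 n | k ∈ p.parts} := by
    ext k
    simp only [Multiset.mem_toFinset, mem_filter, mem_Icc, iff_and_self]
    exact fun hk => ⟨p.parts_pos hk, Nat.Partition.le_of_mem_parts hk⟩
  simp only [S, R, hdistinct, sum_card_filter_comm]

theorem Q_one_eq_sum (n : ℕ) :
    Q 1 n = ∑ m ∈ Icc 1 n, #{p : n.Partition | m ≤ p.parts.count 1} := by
  have hcount (p : n.Partition) : p.parts.count 1 = #{m ∈ Icc 1 n | m ≤ p.parts.count 1} := by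
    have hIcc : {m ∈ Icc 1 n | m ≤ p.parts.count 1} = Icc 1 (p.parts.count 1) := by
      ext m
      have := p.count_parts_le 1
      simp only [mem_filter, mem_Icc]
      omega
    rw [hIcc, Nat.card_Icc, Nat.add_sub_cancel]
  simp only [Q]
  rw [sum_congr rfl fun p _ => hcount p, sum_card_filter_comm]

theorem stanley_general (n : ℕ) : S n = Q 1 n := by
  rw [S_eq_sum_R, Q_one_eq_sum]
  refine sum_congr rfl fun k hk => ?_
  obtain ⟨hk1, hkn⟩ := mem_Icc.1 hk
  rw [R_eq_P hk1 hkn, Nat.Partition.card_filter_le_count one_pos (by simpa using hkn), mul_one]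

theorem stanley (n : ℕ) (hn : 0 < n) : S n = Q 1 n :=
  stanley_general n
end

section
/- For every positive integer n, the total number of occurrences of the part 1 among all partitions of n equals the sum of the partition numbers of 0, 1, ..., n-1; that is, Q_1(n) = P(0) + P(1) + ... + P(n-1), where P(0) = 1. -/
/-! Deleting one part `k` is a bijection from the partitions of `n` that contain `k` onto the
partitions of `n - k`, and it lowers the multiplicity of `k` by one. Hence
`Q k n = Q k (n - k) + P (n - k)`, which for `k = 1` telescopes to the sum of `P`. -/

open Finset

theorem Q_eq_Q_sub_add_P {k n : ℕ} (hk : 1 ≤ k) (hkn : k ≤ n) :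
    Q k n = Q k (n - k) + P (n - k) := by
  have hsupp : Q k n = ∑ p : {p : n.Partition // k ∈ p.parts}, p.1.parts.count k := by
    rw [Q, ← sum_filter_of_ne fun p _ hp => Multiset.count_ne_zero.mp hp]
    exact sum_subtype _ (by simp) _
  rw [hsupp, ← (Nat.Partition.partitionWithPartEquiv hk hkn).symm.sum_comp]
  simp [Multiset.count_cons_self, sum_add_distrib, Q, P]

theorem Q_one_eq_sum_P_general (n : ℕ) :
    Q 1 n = ∑ i ∈ Finset.range n, P i := by
  induction n with
  | zero => simp [Q]
  | succ n ih => rw [sum_range_succ, ← ih, Q_eq_Q_sub_add_P le_rfl (by omega), Nat.add_sub_cancel]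

theorem Q_one_eq_sum_P (n : ℕ) (hn : 0 < n) :
    Q 1 n = ∑ i ∈ Finset.range n, P i :=
  Q_one_eq_sum_P_general n
end

section
/- For all positive integers n and k, the total number of occurrences of k among all partitions of n equals the sum of P(i) over all integers i with 0 ≤ i ≤ n-1 and i ≡ n (mod k); that is, Q_k(n) = Σ_{0 ≤ i < n, i ≡ n mod k} P(i), where P(0) = 1. -/
/-!
Removing one part `k` is a bijection from the partitions of `n` containing `k` onto the
partitions of `n - k`, and it lowers the multiplicity of `k` by one. Summing multiplicities
gives `Q k n = P (n - k) + Q k (n - k)`; unfolding this recursion down to `Q k m = 0` for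
`m < k` yields `P (n - k) + P (n - 2k) + ⋯`, the sum over `i < n` with `i ≡ n [MOD k]`.
-/

open Finset

lemma Q_eq_zero_of_lt {k n : ℕ} (h : n < k) : Q k n = 0 :=
  sum_eq_zero fun _ _ =>
    Multiset.count_eq_zero.mpr fun hk => (Nat.Partition.le_of_mem_parts hk).not_gt h

lemma Q_eq_sum_subtype_mem_parts (k n : ℕ) :
    Q k n = ∑ p : {p : Nat.Partition n // k ∈ p.parts}, p.1.parts.count k := by
  rw [Q, ← Fintype.sum_subtype_add_sum_subtype (fun p : Nat.Partition n => k ∈ p.parts),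
    add_eq_left]
  exact sum_eq_zero fun p _ => Multiset.count_eq_zero.mpr p.2

lemma Q_eq_P_sub_add_Q_sub {k n : ℕ} (hk : 0 < k) (hkn : k ≤ n) :
    Q k n = P (n - k) + Q k (n - k) := by
  rw [Q_eq_sum_subtype_mem_parts, ← (Nat.Partition.partitionWithPartEquiv hk hkn).symm.sum_comp]
  simp only [Nat.Partition.partitionWithPartEquiv_symm_apply_parts, Multiset.count_cons_self,
    sum_add_distrib, sum_const, card_univ, smul_eq_mul, mul_one, P, Q]
  ring

lemma filter_range_modEq_eq_insert {k n : ℕ} (hk : 0 < k) (hkn : k ≤ n) :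
    (range n).filter (fun i => i % k = n % k) =
      insert (n - k) ((range (n - k)).filter (fun i => i % k = (n - k) % k)) := by
  have hmod : (n - k) % k = n % k := by
    rw [← Nat.add_mod_right (n - k), Nat.sub_add_cancel hkn]
  ext i
  simp only [mem_insert, mem_filter, mem_range, hmod]
  constructor
  · rintro ⟨hin, hi⟩
    refine (lt_or_ge i (n - k)).symm.imp (fun hle => ?_) fun hlt => ⟨hlt, hi⟩
    exact Nat.ModEq.eq_of_abs_lt (hi.trans hmod.symm) (by rw [abs_lt]; omega)
  · rintro (rfl | ⟨hi, hi'⟩)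
    · exact ⟨by omega, hmod⟩
    · exact ⟨by omega, hi'⟩

theorem Q_eq_sum_P_congruent_general (n k : ℕ) (hk : 0 < k) :
    Q k n = ∑ i ∈ (Finset.range n).filter (fun i => i % k = n % k), P i := by
  induction n using Nat.strong_induction_on with
  | _ n ih =>
    rcases lt_or_ge n k with hnk | hkn
    · rw [Q_eq_zero_of_lt hnk, filter_eq_empty_iff.mpr fun i hi hmod => ?_, sum_empty]
      have hin := mem_range.mp hi
      exact hin.ne (Nat.ModEq.eq_of_lt_of_lt hmod (hin.trans hnk) hnk)
    · rw [Q_eq_P_sub_add_Q_sub hk hkn, ih (n - k) (by omega), filter_range_modEq_eq_insert hk hkn,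
        sum_insert (by simp)]

theorem Q_eq_sum_P_congruent (n k : ℕ) (hn : 0 < n) (hk : 0 < k) :
    Q k n = ∑ i ∈ (Finset.range n).filter (fun i => i % k = n % k), P i :=
  Q_eq_sum_P_congruent_general n k hk
end
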